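/- Let D be a directed graph and O an ornamentation of D. Define the reorientation R_O of tc(D) by rev(R_O) = {(u,v) ∈ tc(D) : u ∈ O(v)}. Then orn_{R_O} = O, i.e., the map O ↦ R_O is a section of the map R ↦ orn_R. Consequently, R ↦ orn_R is an order-preserving surjection from the reorientation lattice of tc(D) (ordered by inclusion of reversed edge sets) onto the ornamentation lattice Orn(D). -/

import Mathlib

/-- A directed path from `u` to `v` in the digraph `D` using only vertices of `U`. -/
def pathIn {V : Type*} (D : V → V → Prop) (U : Set V) (u v : V) : Prop :=
  Relation.ReflTransGen (fun a b => D a b ∧ a ∈ U ∧ b ∈ U) u v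

/-- An ornament of `D` at `v`. -/
def IsOrnament {V : Type*} (D : V → V → Prop) (v : V) (U : Set V) : Prop :=
  v ∈ U ∧ ∀ u ∈ U, pathIn D U u v

/-- An ornamentation of `D`. -/
def IsOrnamentation {V : Type*} (D : V → V → Prop) (O : V → Set V) : Prop :=
  (∀ v, IsOrnament D v (O v)) ∧ ∀ u v, u ∈ O v → O u ⊆ O v

/-- The inclusion maximal ornament of `D` at `v` contained in `X`. -/
def maxOrnIn {V : Type*} (D : V → V → Prop) (v : V) (X : Set V) : Set V :=
  ⋃₀ {U | IsOrnament D v U ∧ U ⊆ X}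

/-- The ornamentation `orn_R` associated to a reorientation with reversed edge set `rev`. -/
def ornOfRev {V : Type*} (D rev : V → V → Prop) (v : V) : Set V :=
  maxOrnIn D v {u | Relation.ReflTransGen rev u v}

/-- The reorientation `R_O` of `tc(D)` associated to an ornamentation `O`:
an edge `(u,v)` of `tc(D)` is reversed iff `u ∈ O v`. -/
def revOfOrn {V : Type*} (D : V → V → Prop) (O : V → Set V) : V → V → Prop :=
  fun u v => Relation.TransGen D u v ∧ u ∈ O v

/-! The vertices reaching `v` along reversed edges of `R_O` are exactly those of `O v`: the set
`O v` is closed under taking `R_O`-predecessors because `O` is transitive, and every `u ∈ O v`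
reaches `v` by a path of `D`, so `(u, v)` is itself a reversed edge of `tc(D)`. Since `O v` is an
ornament at `v`, it is the largest one inside itself. Monotonicity is immediate from the
definition of `orn_R` as a union. -/

theorem pathIn.reflTransGen {V : Type*} {D : V → V → Prop} {U : Set V} {u v : V}
    (h : pathIn D U u v) : Relation.ReflTransGen D u v :=
  Relation.ReflTransGen.mono (fun _ _ hab => hab.1) _ _ h

section maxOrnIn

variable {V : Type*} {D : V → V → Prop} {v : V}

theorem maxOrnIn_subset (X : Set V) : maxOrnIn D v X ⊆ X :=
  Set.sUnion_subset fun _ hU => hU.2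

theorem IsOrnament.subset_maxOrnIn {U X : Set V} (hU : IsOrnament D v U) (hUX : U ⊆ X) :
    U ⊆ maxOrnIn D v X :=
  Set.subset_sUnion_of_mem ⟨hU, hUX⟩

theorem IsOrnament.maxOrnIn_eq {U : Set V} (hU : IsOrnament D v U) : maxOrnIn D v U = U :=
  (maxOrnIn_subset U).antisymm (hU.subset_maxOrnIn subset_rfl)

theorem maxOrnIn_mono {X Y : Set V} (hXY : X ⊆ Y) : maxOrnIn D v X ⊆ maxOrnIn D v Y :=
  Set.sUnion_subset fun _ hU => hU.1.subset_maxOrnIn (hU.2.trans hXY)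

end maxOrnIn

theorem ornOfRev_mono {V : Type*} (D : V → V → Prop) {rev₁ rev₂ : V → V → Prop}
    (h : ∀ u v, rev₁ u v → rev₂ u v) (v : V) : ornOfRev D rev₁ v ⊆ ornOfRev D rev₂ v :=
  maxOrnIn_mono fun _ hu => Relation.ReflTransGen.mono h _ _ hu

namespace IsOrnamentation

variable {V : Type*} {D : V → V → Prop} {O : V → Set V}

theorem mem_of_reflTransGen (hO : IsOrnamentation D O) {r : V → V → Prop}
    (hr : ∀ u v, r u v → u ∈ O v) {u v : V} (h : Relation.ReflTransGen r u v) : u ∈ O v := by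
  induction h using Relation.ReflTransGen.head_induction_on with
  | refl => exact (hO.1 v).1
  | head hab _ ih => exact hO.2 _ _ ih (hr _ _ hab)

theorem reflTransGen_revOfOrn_iff (hO : IsOrnamentation D O) {u v : V} :
    Relation.ReflTransGen (revOfOrn D O) u v ↔ u ∈ O v := by
  refine ⟨hO.mem_of_reflTransGen fun _ _ h => h.2, fun hu => ?_⟩
  obtain rfl | hD := Relation.reflTransGen_iff_eq_or_transGen.mp ((hO.1 v).2 u hu).reflTransGen
  · exact .refl
  · exact .single ⟨hD, hu⟩

theorem ornOfRev_revOfOrn_eq (hO : IsOrnamentation D O) : ornOfRev D (revOfOrn D O) = O := by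
  funext v
  have hX : {u | Relation.ReflTransGen (revOfOrn D O) u v} = O v :=
    Set.ext fun _ => hO.reflTransGen_revOfOrn_iff
  rw [ornOfRev, hX, (hO.1 v).maxOrnIn_eq]

end IsOrnamentation

/-- `orn_{R_O} = O`, i.e. `O ↦ R_O` is a section of `R ↦ orn_R`; consequently `R ↦ orn_R`
is an order-preserving surjection from the reorientation lattice of `tc(D)` onto the
ornamentation lattice of `D`. -/
theorem ornOfRev_revOfOrn {V : Type*} (D : V → V → Prop) (O : V → Set V)
    (hO : IsOrnamentation D O) :
    ornOfRev D (revOfOrn D O) = O ∧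
    (∀ rev₁ rev₂ : V → V → Prop,
      (∀ u v, rev₁ u v → Relation.TransGen D u v) →
      (∀ u v, rev₂ u v → Relation.TransGen D u v) →
      (∀ u v, rev₁ u v → rev₂ u v) →
      ∀ v, ornOfRev D rev₁ v ⊆ ornOfRev D rev₂ v) ∧
    (∀ O' : V → Set V, IsOrnamentation D O' →
      ∃ rev : V → V → Prop, (∀ u v, rev u v → Relation.TransGen D u v) ∧
        ornOfRev D rev = O') := by
  refine ⟨hO.ornOfRev_revOfOrn_eq, fun _ _ _ _ h => ornOfRev_mono D h, fun O' hO' => ?_⟩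
  exact ⟨revOfOrn D O', fun _ _ h => h.1, hO'.ornOfRev_revOfOrn_eq⟩
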